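/- arXiv:1204.2844 — 2 statements merged into one kernel-verified Lean document; each statement's English description precedes it below -/
import Mathlib

section
/- Let G' be a legal contracted graph of G (obtained by contracting disjoint clusters, each (1/3)-well-linked in G and containing no terminals). If S' ⊆ V(G') \ T is α-well-linked for a subset E' ⊆ out_{G'}(S') of its boundary edges (α < 1), and S ⊆ V(G) is obtained from S' by un-contracting every super-node, then S is (α/3)-well-linked for E' in G. -/
open scoped Classical

namespace VS

/-- A walk in a multigraph whose edges `E` have endpoints given by `ends`. -/
structure Walk (V : Type*) (E : Type*) (ends : E → Sym2 V) where
  n : ℕ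
  vert : Fin (n + 1) → V
  edge : Fin n → E
  coh : ∀ i : Fin n, ends (edge i) = s(vert i.castSucc, vert i.succ)

namespace Walk

variable {V E : Type*} {ends : E → Sym2 V}

def start (w : Walk V E ends) : V := w.vert 0

def finish (w : Walk V E ends) : V := w.vert (Fin.last w.n)

def uses (w : Walk V E ends) (f : E) : Prop := ∃ i, w.edge i = f

/-- Number of occurrences of the edge `f` on the walk. -/
noncomputable def mult (w : Walk V E ends) (f : E) : ℕ :=
  Nat.card {i : Fin w.n // w.edge i = f}

/-- The first edge of the walk, if any. -/
noncomputable def fe (w : Walk V E ends) : Option E :=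
  if h : 0 < w.n then some (w.edge ⟨0, h⟩) else none

/-- The last edge of the walk, if any. -/
noncomputable def le (w : Walk V E ends) : Option E :=
  if h : 0 < w.n then some (w.edge ⟨w.n - 1, by omega⟩) else none

/-- All edges of the walk other than the first and the last one have both
endpoints in `S` (i.e. the walk is contained in `S`). -/
def InternalIn (w : Walk V E ends) (S : Set V) : Prop :=
  ∀ i : Fin w.n, (i : ℕ) ≠ 0 → (i : ℕ) + 1 ≠ w.n → ∀ x ∈ ends (w.edge i), x ∈ S

end Walk

variable {V V' E : Type*}

/-- `e` has exactly one endpoint in `S`, i.e. `e ∈ out(S)`. -/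
def Out (ends : E → Sym2 V) (S : Set V) (e : E) : Prop :=
  ∃ u v, ends e = s(u, v) ∧ u ∈ S ∧ v ∉ S

/-- `e` has one endpoint in `A` and the other one in `B`. -/
def Crosses (ends : E → Sym2 V) (A B : Set V) (e : E) : Prop :=
  ∃ u v, ends e = s(u, v) ∧ u ∈ A ∧ v ∈ B

noncomputable def outCard (ends : E → Sym2 V) (S : Set V) : ℕ :=
  Nat.card {e : E // Out ends S e}

noncomputable def crossCard (ends : E → Sym2 V) (A B : Set V) : ℕ :=
  Nat.card {e : E // Crosses ends A B e}

/-- Value of the minimum edge cut separating `TA` from `TB` (unit capacities). -/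
noncomputable def minCut (ends : E → Sym2 V) (TA TB : Set V) : ℕ :=
  sInf { n : ℕ | ∃ A : Set V, TA ⊆ A ∧ Disjoint A TB ∧ n = outCard ends A }

/-- `R` is `α`-well-linked: for every partition `(A, B)` of `R`,
`|E(A,B)| ≥ α · min (|out R ∩ out A|) (|out R ∩ out B|)`. -/
def WellLinked (ends : E → Sym2 V) (α : ℝ) (R : Set V) : Prop :=
  ∀ A B : Set V, A ∪ B = R → Disjoint A B →
    α * min (Nat.card {e : E // Out ends R e ∧ Out ends A e} : ℝ)
        (Nat.card {e : E // Out ends R e ∧ Out ends B e}) ≤ crossCard ends A B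

/-- `R` is `α`-well-linked for the edge set `E' ⊆ out(R)`. -/
def WellLinkedFor (ends : E → Sym2 V) (α : ℝ) (R : Set V) (E' : Set E) : Prop :=
  ∀ A B : Set V, A ∪ B = R → Disjoint A B →
    α * min (Nat.card {e : E // e ∈ E' ∧ Out ends A e} : ℝ)
        (Nat.card {e : E // e ∈ E' ∧ Out ends B e}) ≤ crossCard ends A B

/-- `φ : V → V'` is the quotient map contracting exactly the clusters of `𝒞`. -/
def IsContraction (φ : V → V') (𝒞 : Set (Set V)) : Prop :=
  (∀ S ∈ 𝒞, ∀ u ∈ S, ∀ v ∈ S, φ u = φ v) ∧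
  (∀ u v : V, φ u = φ v → u = v ∨ ∃ S ∈ 𝒞, u ∈ S ∧ v ∈ S)

/-- Amount of flow that the path-flow `F` routes between the vertices `x` and `y`. -/
noncomputable def routed {ends : E → Sym2 V} (F : List (Walk V E ends × ℝ)) (x y : V) : ℝ :=
  (F.map (fun p => if s(p.1.start, p.1.finish) = s(x, y) then p.2 else 0)).sum

/-- Amount of flow that the path-flow `F` routes between the edges `e` and `e'`. -/
noncomputable def routedE {ends : E → Sym2 V} (F : List (Walk V E ends × ℝ)) (e e' : E) : ℝ :=
  (F.map (fun p =>
    if (p.1.fe = some e ∧ p.1.le = some e') ∨ (p.1.fe = some e' ∧ p.1.le = some e)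
    then p.2 else 0)).sum

/-- Total flow of the path-flow `F` through the edge `f` (congestion at `f`,
for unit capacities). -/
noncomputable def congAt {ends : E → Sym2 V} (F : List (Walk V E ends × ℝ)) (f : E) : ℝ :=
  (F.map (fun p => p.2 * (p.1.mult f : ℝ))).sum

/-- All weights of the path-flow are nonnegative. -/
def NonnegWt {ends : E → Sym2 V} (F : List (Walk V E ends × ℝ)) : Prop := ∀ p ∈ F, 0 ≤ p.2

private lemma sym2_exists_pair {z : Sym2 V} : ∃ u v, z = s(u, v) :=
  Sym2.ind (fun u v => ⟨u, v, rfl⟩) z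

private lemma out_iff (ends : E → Sym2 V) {X : Set V} {e : E} {p q : V}
    (he : ends e = s(p, q)) :
    Out ends X e ↔ (p ∈ X ∧ q ∉ X) ∨ (q ∈ X ∧ p ∉ X) := by
  constructor
  · rintro ⟨u, v, huv, hu, hv⟩
    rw [he] at huv
    rcases Sym2.eq_iff.mp huv with ⟨h1, h2⟩ | ⟨h1, h2⟩
    · subst h1; subst h2; exact Or.inl ⟨hu, hv⟩
    · subst h1; subst h2; exact Or.inr ⟨hu, hv⟩
  · rintro (⟨h1, h2⟩ | ⟨h1, h2⟩)
    · exact ⟨p, q, he, h1, h2⟩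
    · exact ⟨q, p, by rw [he, Sym2.eq_swap], h1, h2⟩

private lemma crosses_iff (ends : E → Sym2 V) {X Y : Set V} {e : E} {p q : V}
    (he : ends e = s(p, q)) :
    Crosses ends X Y e ↔ (p ∈ X ∧ q ∈ Y) ∨ (q ∈ X ∧ p ∈ Y) := by
  constructor
  · rintro ⟨u, v, huv, hu, hv⟩
    rw [he] at huv
    rcases Sym2.eq_iff.mp huv with ⟨h1, h2⟩ | ⟨h1, h2⟩
    · subst h1; subst h2; exact Or.inl ⟨hu, hv⟩
    · subst h1; subst h2; exact Or.inr ⟨hu, hv⟩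
  · rintro (⟨h1, h2⟩ | ⟨h1, h2⟩)
    · exact ⟨p, q, he, h1, h2⟩
    · exact ⟨q, p, by rw [he, Sym2.eq_swap], h1, h2⟩

private lemma card_eF [Fintype E] (P : E → Prop) [DecidablePred P] :
    Nat.card {e : E // P e} = (Finset.univ.filter P).card := by
  rw [Nat.card_eq_fintype_card, Fintype.card_subtype]

/-- If `G'` is a legal contracted graph of `G` (contracting disjoint
`(1/3)`-well-linked non-terminal clusters), `S'` is a set of non-terminal vertices of `G'`
that is `α`-well-linked for `E' ⊆ out_{G'}(S')` with `α < 1`, and `S` is obtained from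
`S'` by un-contracting every super-node, then `S` is `(α/3)`-well-linked for `E'` in `G`. -/
theorem stmt7 {V V' E : Type*} [Fintype V] [Fintype V'] [Fintype E]
    (ends : E → Sym2 V) (φ : V → V') (𝒞 : Set (Set V)) (T : Set V)
    (hdisj : 𝒞.Pairwise Disjoint) (hT : ∀ C ∈ 𝒞, Disjoint C T)
    (hwl𝒞 : ∀ C ∈ 𝒞, WellLinked ends (1 / 3) C)
    (hcontr : IsContraction φ 𝒞)
    (S' : Set V') (hS' : Disjoint S' (φ '' T))
    (E' : Set E) (α : ℝ) (hα0 : 0 < α) (hα1 : α < 1)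
    (hE' : ∀ e ∈ E', Out (fun e => (ends e).map φ) S' e)
    (hwl : WellLinkedFor (fun e => (ends e).map φ) α S' E') :
    WellLinkedFor ends (α / 3) (φ ⁻¹' S') E' := by
  classical
  intro A B hABu hABd
  set S : Set V := φ ⁻¹' S' with hSdef
  have memS : ∀ x : V, x ∈ S ↔ φ x ∈ S' := fun x => Iff.rfl
  have hAS : A ⊆ S := hABu ▸ Set.subset_union_left
  have hBS : B ⊆ S := hABu ▸ Set.subset_union_right
  have hSAB : ∀ x, x ∈ S → x ∈ A ∨ x ∈ B := by
    intro x hx; rw [← hABu] at hx; exact hx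
  -- canonical endpoints of E'-edges
  have hE'p : ∀ e ∈ E', ∃ p q, ends e = s(p, q) ∧ p ∈ S ∧ q ∉ S := by
    intro e he
    obtain ⟨u', v', hmap, hu', hv'⟩ := hE' e he
    obtain ⟨p, q, hpq⟩ := sym2_exists_pair (z := ends e)
    change Sym2.map φ (ends e) = s(u', v') at hmap
    rw [hpq, Sym2.map_pair_eq] at hmap
    rcases Sym2.eq_iff.mp hmap with ⟨h1, h2⟩ | ⟨h1, h2⟩
    · refine ⟨p, q, hpq, ?_, ?_⟩
      · rw [memS, h1]; exact hu'
      · rw [memS, h2]; exact hv'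
    · refine ⟨q, p, by rw [hpq, Sym2.eq_swap], ?_, ?_⟩
      · rw [memS, h2]; exact hu'
      · rw [memS, h1]; exact hv'
  choose pe qe hpe hpeS hqeS using hE'p
  -- cluster facts
  have hclusEq : ∀ C ∈ 𝒞, ∀ C' ∈ 𝒞, ∀ x, x ∈ C → x ∈ C' → C = C' := by
    intro C hC C' hC' x hx hx'
    by_contra hne
    exact Set.disjoint_left.mp (hdisj hC hC' hne) hx hx'
  have hclusS : ∀ C ∈ 𝒞, ∀ u ∈ C, u ∈ S → C ⊆ S := by
    intro C hC u hu huS v hv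
    rw [memS, ← hcontr.1 C hC u hu v hv]; exact (memS u).mp huS
  -- the finsets of edges
  have memF : ∀ (P : E → Prop) (e : E), e ∈ Finset.univ.filter P ↔ P e := by
    intro P e; simp
  set TA : Set V → Finset E :=
    fun C => Finset.univ.filter (fun e => Out ends C e ∧ Out ends (A ∩ C) e) with hTA
  set TB : Set V → Finset E :=
    fun C => Finset.univ.filter (fun e => Out ends C e ∧ Out ends (B ∩ C) e) with hTB
  set mv : Set V → Prop := fun C => (TA C).card ≤ (TB C).card with hmv
  set Split : Set (Set V) := {C | C ∈ 𝒞 ∧ (A ∩ C).Nonempty ∧ (B ∩ C).Nonempty} with hSplit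
  set 𝒮 : Finset (Set V) := (Set.toFinite Split).toFinset with h𝒮
  have mem𝒮 : ∀ C, C ∈ 𝒮 ↔ C ∈ Split := by
    intro C; rw [h𝒮, Set.Finite.mem_toFinset]
  -- the modified partition
  set Bstar : Set V :=
    (B \ ⋃ C ∈ {C | C ∈ Split ∧ ¬ mv C}, (B ∩ C)) ∪ ⋃ C ∈ {C | C ∈ Split ∧ mv C}, (A ∩ C)
    with hBstarDef
  set Astar : Set V := S \ Bstar with hAstarDef
  have hBstarS : Bstar ⊆ S := by
    rintro x (hx | hx)
    · exact hBS hx.1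
    · simp only [Set.mem_iUnion, exists_prop] at hx
      obtain ⟨C, _, hx⟩ := hx
      exact hAS hx.1
  have hAstarS : Astar ⊆ S := Set.diff_subset
  have hABstar : Astar ∪ Bstar = S := Set.diff_union_of_subset hBstarS
  have hdisjStar : Disjoint Astar Bstar := Set.disjoint_sdiff_left
  -- structural facts about the modified partition
  have hmvsub : ∀ C, C ∈ Split → mv C → C ⊆ Bstar := by
    intro C hCsp hmvC
    have hC : C ∈ 𝒞 := hCsp.1
    have hCS : C ⊆ S := hclusS C hC _ hCsp.2.1.choose_spec.2 (hAS hCsp.2.1.choose_spec.1)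
    intro x hx
    rcases hSAB x (hCS hx) with hxA | hxB
    · exact Or.inr (Set.mem_biUnion (⟨hCsp, hmvC⟩ : C ∈ {C | C ∈ Split ∧ mv C}) ⟨hxA, hx⟩)
    · refine Or.inl ⟨hxB, ?_⟩
      intro hmem
      simp only [Set.mem_iUnion, exists_prop] at hmem
      obtain ⟨C', ⟨hC'sp, hnm⟩, hx'⟩ := hmem
      have : C = C' := hclusEq C hC C' hC'sp.1 x hx hx'.2
      exact hnm (this ▸ hmvC)
  have hstaydisj : ∀ C, C ∈ Split → ¬ mv C → Disjoint C Bstar := by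
    intro C hCsp hnm
    rw [Set.disjoint_right]
    rintro x (hx | hx)
    · intro hxC
      exact hx.2 (Set.mem_biUnion (⟨hCsp, hnm⟩ : C ∈ {C | C ∈ Split ∧ ¬ mv C}) ⟨hx.1, hxC⟩)
    · simp only [Set.mem_iUnion, exists_prop] at hx
      obtain ⟨C', ⟨hC'sp, hmvC'⟩, hx'⟩ := hx
      intro hxC
      have : C = C' := hclusEq C hCsp.1 C' hC'sp.1 x hxC hx'.2
      exact hnm (this ▸ hmvC')
  have hnonsplitB : ∀ C ∈ 𝒞, C ∉ Split → C ⊆ B → C ⊆ Bstar := by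
    intro C hC hns hCB x hx
    refine Or.inl ⟨hCB hx, ?_⟩
    intro hmem
    simp only [Set.mem_iUnion, exists_prop] at hmem
    obtain ⟨C', ⟨hC'sp, _⟩, hx'⟩ := hmem
    have : C = C' := hclusEq C hC C' hC'sp.1 x hx hx'.2
    exact hns (this ▸ hC'sp)
  have hnonsplitA : ∀ C ∈ 𝒞, C ⊆ A → Disjoint C Bstar := by
    intro C hC hCA
    rw [Set.disjoint_right]
    rintro x (hx | hx)
    · intro hxC
      exact Set.disjoint_left.mp hABd (hCA hxC) hx.1
    · simp only [Set.mem_iUnion, exists_prop] at hx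
      obtain ⟨C', ⟨hC'sp, _⟩, hx'⟩ := hx
      intro hxC
      have hCC' : C = C' := hclusEq C hC C' hC'sp.1 x hxC hx'.2
      have : (B ∩ C).Nonempty := hCC' ▸ hC'sp.2.2
      obtain ⟨y, hy⟩ := this
      exact Set.disjoint_left.mp hABd (hCA hy.2) hy.1
  -- clusters are whole in the modified partition
  have hclusB : ∀ C ∈ 𝒞, ∀ w ∈ C, w ∈ Bstar → ∀ v ∈ C, v ∈ Bstar := by
    intro C hC w hw hwB v hv
    have hCS : C ⊆ S := hclusS C hC w hw (hBstarS hwB)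
    by_cases hsp : C ∈ Split
    · by_cases hmvC : mv C
      · exact hmvsub C hsp hmvC hv
      · exact absurd hwB (Set.disjoint_left.mp (hstaydisj C hsp hmvC) hw)
    · have : C ⊆ A ∨ C ⊆ B := by
        by_cases hA : (A ∩ C).Nonempty
        · by_cases hB : (B ∩ C).Nonempty
          · exact absurd ⟨hC, hA, hB⟩ hsp
          · left; intro x hx
            rcases hSAB x (hCS hx) with h | h
            · exact h
            · exact absurd ⟨x, h, hx⟩ hB
        · right; intro x hx
          rcases hSAB x (hCS hx) with h | h
          · exact absurd ⟨x, h, hx⟩ hA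
          · exact h
      rcases this with hCA | hCB
      · exact absurd hwB (Set.disjoint_left.mp (hnonsplitA C hC hCA) hw)
      · exact hnonsplitB C hC hsp hCB hv
  -- loss characterizations
  have hAloss : ∀ x ∈ A, x ∉ Astar → ∃ C, C ∈ Split ∧ mv C ∧ x ∈ A ∩ C := by
    intro x hxA hxA'
    have hxB : x ∈ Bstar := by
      by_contra h; exact hxA' ⟨hAS hxA, h⟩
    rcases hxB with h | h
    · exact absurd h.1 (Set.disjoint_left.mp hABd hxA)
    · simp only [Set.mem_iUnion, exists_prop] at h
      obtain ⟨C, ⟨hCsp, hmvC⟩, hx⟩ := h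
      exact ⟨C, hCsp, hmvC, hx⟩
  have hBloss : ∀ x ∈ B, x ∉ Bstar → ∃ C, C ∈ Split ∧ ¬ mv C ∧ x ∈ B ∩ C := by
    intro x hxB hxB'
    have : x ∈ ⋃ C ∈ {C | C ∈ Split ∧ ¬ mv C}, (B ∩ C) := by
      by_contra h; exact hxB' (Or.inl ⟨hxB, h⟩)
    simp only [Set.mem_iUnion, exists_prop] at this
    obtain ⟨C, ⟨hCsp, hnm⟩, hx⟩ := this
    exact ⟨C, hCsp, hnm, hx⟩
  -- edge finsets
  set cut : Finset E := Finset.univ.filter (Crosses ends A B) with hcut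
  set cutStar : Finset E := Finset.univ.filter (Crosses ends Astar Bstar) with hcutStar
  set EA : Finset E := Finset.univ.filter (fun e => e ∈ E' ∧ Out ends A e) with hEA
  set EB : Finset E := Finset.univ.filter (fun e => e ∈ E' ∧ Out ends B e) with hEB
  set EAs : Finset E := Finset.univ.filter (fun e => e ∈ E' ∧ Out ends Astar e) with hEAs
  set EBs : Finset E := Finset.univ.filter (fun e => e ∈ E' ∧ Out ends Bstar e) with hEBs
  set KC : Set V → Finset E :=
    fun C => Finset.univ.filter (Crosses ends (A ∩ C) (B ∩ C)) with hKC
  set LL : Set V → Finset E := fun C =>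
    if mv C then Finset.univ.filter (fun e => e ∈ E' ∧ Out ends (A ∩ C) e)
    else Finset.univ.filter (fun e => e ∈ E' ∧ Out ends (B ∩ C) e) with hLL
  set NN : Set V → Finset E := fun C =>
    if mv C then Finset.univ.filter (fun e => Out ends C e ∧ Out ends (A ∩ C) e ∧ e ∉ E')
    else Finset.univ.filter (fun e => Out ends C e ∧ Out ends (B ∩ C) e ∧ e ∉ E') with hNN
  -- Out for E'-edges is membership of the canonical S-endpoint
  have outE' : ∀ e, ∀ he : e ∈ E', ∀ X : Set V, X ⊆ S → (Out ends X e ↔ pe e he ∈ X) := by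
    intro e he X hXS
    rw [out_iff ends (hpe e he)]
    constructor
    · rintro (⟨h, _⟩ | ⟨h, _⟩)
      · exact h
      · exact absurd (hXS h) (hqeS e he)
    · intro h
      exact Or.inl ⟨h, fun hq => (hqeS e he) (hXS hq)⟩
  have hE'notboth : ∀ e ∈ E', ∀ u v, ends e = s(u, v) → u ∈ S → v ∈ S → False := by
    intro e he u v huv hu hv
    have h2 := hpe e he
    rw [huv] at h2
    rcases Sym2.eq_iff.mp h2 with ⟨h3, h4⟩ | ⟨h3, h4⟩
    · exact (hqeS e he) (h4 ▸ hv)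
    · exact (hqeS e he) (h3 ▸ hu)
  have hsplitPart : ∀ C, C ∈ Split → (A ∩ C) ∪ (B ∩ C) = C ∧ C ⊆ S := by
    intro C hCsp
    have hCS : C ⊆ S := hclusS C hCsp.1 _ hCsp.2.1.choose_spec.2 (hAS hCsp.2.1.choose_spec.1)
    refine ⟨?_, hCS⟩
    ext x
    constructor
    · rintro (h | h) <;> exact h.2
    · intro hx
      rcases hSAB x (hCS hx) with h | h
      · exact Or.inl ⟨h, hx⟩
      · exact Or.inr ⟨h, hx⟩
  -- the per-cluster inequality
  have hperC : ∀ C ∈ 𝒮, ((LL C).card : ℝ) + (NN C).card ≤ 3 * (KC C).card := by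
    intro C hC𝒮
    have hCsp : C ∈ Split := (mem𝒮 C).mp hC𝒮
    obtain ⟨hCpart, hCS⟩ := hsplitPart C hCsp
    have hdAB : Disjoint (A ∩ C) (B ∩ C) :=
      hABd.mono Set.inter_subset_left Set.inter_subset_left
    have hwlC := hwl𝒞 C hCsp.1 (A ∩ C) (B ∩ C) hCpart hdAB
    have eK : crossCard ends (A ∩ C) (B ∩ C) = (KC C).card := by simp only [hKC]; exact card_eF _
    have eA : Nat.card {e : E // Out ends C e ∧ Out ends (A ∩ C) e} = (TA C).card := by simp only [hTA]; exact card_eF _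
    have eB : Nat.card {e : E // Out ends C e ∧ Out ends (B ∩ C) e} = (TB C).card := by simp only [hTB]; exact card_eF _
    rw [eK, eA, eB] at hwlC
    by_cases hmvC : mv C
    · have hmvC' : (TA C).card ≤ (TB C).card := hmvC
      have hsub : (LL C) ∪ (NN C) ⊆ TA C := by
        intro e he
        rw [Finset.mem_union] at he
        simp only [hLL, hNN, if_pos hmvC, Finset.mem_filter, Finset.mem_univ, true_and] at he
        simp only [hTA, Finset.mem_filter, Finset.mem_univ, true_and]
        rcases he with ⟨heE, hout⟩ | ⟨h1, h2, _⟩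
        · refine ⟨?_, hout⟩
          have hpA : pe e heE ∈ A ∩ C :=
            (outE' e heE _ (Set.inter_subset_left.trans hAS)).mp hout
          exact (outE' e heE C hCS).mpr hpA.2
        · exact ⟨h1, h2⟩
      have hdLN : Disjoint (LL C) (NN C) := by
        rw [Finset.disjoint_left]
        intro e he1 he2
        simp only [hLL, hNN, if_pos hmvC, Finset.mem_filter, Finset.mem_univ, true_and]
          at he1 he2
        exact he2.2.2 he1.1
      have hcards : (LL C).card + (NN C).card ≤ (TA C).card := by
        rw [← Finset.card_union_of_disjoint hdLN]
        exact Finset.card_le_card hsub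
      have hminA : min ((TA C).card : ℝ) ((TB C).card) = ((TA C).card : ℝ) :=
        min_eq_left (by exact_mod_cast hmvC')
      rw [hminA] at hwlC
      have h3 : ((TA C).card : ℝ) ≤ 3 * (KC C).card := by linarith
      have h4 : ((LL C).card : ℝ) + (NN C).card ≤ (TA C).card := by exact_mod_cast hcards
      linarith
    · have hmvC' : (TB C).card ≤ (TA C).card := le_of_not_ge hmvC
      have hsub : (LL C) ∪ (NN C) ⊆ TB C := by
        intro e he
        rw [Finset.mem_union] at he
        simp only [hLL, hNN, if_neg hmvC, Finset.mem_filter, Finset.mem_univ, true_and] at he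
        simp only [hTB, Finset.mem_filter, Finset.mem_univ, true_and]
        rcases he with ⟨heE, hout⟩ | ⟨h1, h2, _⟩
        · refine ⟨?_, hout⟩
          have hpB : pe e heE ∈ B ∩ C :=
            (outE' e heE _ (Set.inter_subset_left.trans hBS)).mp hout
          exact (outE' e heE C hCS).mpr hpB.2
        · exact ⟨h1, h2⟩
      have hdLN : Disjoint (LL C) (NN C) := by
        rw [Finset.disjoint_left]
        intro e he1 he2
        simp only [hLL, hNN, if_neg hmvC, Finset.mem_filter, Finset.mem_univ, true_and]
          at he1 he2
        exact he2.2.2 he1.1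
      have hcards : (LL C).card + (NN C).card ≤ (TB C).card := by
        rw [← Finset.card_union_of_disjoint hdLN]
        exact Finset.card_le_card hsub
      have hminB : min ((TA C).card : ℝ) ((TB C).card) = ((TB C).card : ℝ) :=
        min_eq_right (by exact_mod_cast hmvC')
      rw [hminB] at hwlC
      have h3 : ((TB C).card : ℝ) ≤ 3 * (KC C).card := by linarith
      have h4 : ((LL C).card : ℝ) + (NN C).card ≤ (TB C).card := by exact_mod_cast hcards
      linarith
  -- intra-cluster cut edges are disjoint across clusters
  have hKdisj : ∀ C ∈ 𝒮, ∀ C' ∈ 𝒮, C ≠ C' → Disjoint (KC C) (KC C') := by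
    intro C hC C' hC' hne
    rw [Finset.disjoint_left]
    intro e he he'
    simp only [hKC, Finset.mem_filter, Finset.mem_univ, true_and] at he he'
    obtain ⟨u, v, huv⟩ := sym2_exists_pair (z := ends e)
    rw [crosses_iff ends huv] at he he'
    have hCsp := (mem𝒮 C).mp hC
    have hC'sp := (mem𝒮 C').mp hC'
    rcases he with ⟨h1, h2⟩ | ⟨h1, h2⟩ <;> rcases he' with ⟨h1', h2'⟩ | ⟨h1', h2'⟩
    · exact hne (hclusEq C hCsp.1 C' hC'sp.1 u h1.2 h1'.2)
    · exact Set.disjoint_left.mp hABd h1.1 h2'.1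
    · exact Set.disjoint_left.mp hABd h1'.1 h2.1
    · exact hne (hclusEq C hCsp.1 C' hC'sp.1 u h2.2 h2'.2)
  have hKsum : ∑ C ∈ 𝒮, (KC C).card = (𝒮.biUnion KC).card := (Finset.card_biUnion hKdisj).symm
  have hKsubcut : 𝒮.biUnion KC ⊆ cut := by
    intro e he
    rw [Finset.mem_biUnion] at he
    obtain ⟨C, _, he⟩ := he
    simp only [hKC, Finset.mem_filter, Finset.mem_univ, true_and] at he
    simp only [hcut, Finset.mem_filter, Finset.mem_univ, true_and]
    obtain ⟨u, v, huv, hu, hv⟩ := he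
    exact ⟨u, v, huv, hu.1, hv.1⟩
  set K : Finset E := 𝒮.biUnion KC with hK
  -- cutStar is covered by (cut \ K) and the new-crossing edges
  have hcutStarSub : cutStar ⊆ (cut \ K) ∪ 𝒮.biUnion NN := by
    intro e he
    simp only [hcutStar, Finset.mem_filter, Finset.mem_univ, true_and] at he
    obtain ⟨u, v, huv, huA, hvB⟩ := he
    have huS : u ∈ S := hAstarS huA
    have hvS : v ∈ S := hBstarS hvB
    have hnotE' : e ∉ E' := fun heE => hE'notboth e heE u v huv huS hvS
    rcases hSAB u huS with huAA | huBB
    · rcases hSAB v hvS with hvAA | hvBB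
      · have hvA' : v ∉ Astar := fun h => Set.disjoint_left.mp hdisjStar h hvB
        obtain ⟨C, hCsp, hmvC, hvAC⟩ := hAloss v hvAA hvA'
        refine Finset.mem_union_right _ (Finset.mem_biUnion.mpr ⟨C, (mem𝒮 C).mpr hCsp, ?_⟩)
        have huC : u ∉ C := fun h => Set.disjoint_left.mp hdisjStar huA (hmvsub C hCsp hmvC h)
        simp only [hNN, if_pos hmvC, Finset.mem_filter, Finset.mem_univ, true_and]
        have hswap : ends e = s(v, u) := by rw [huv, Sym2.eq_swap]
        exact ⟨⟨v, u, hswap, hvAC.2, huC⟩, ⟨v, u, hswap, hvAC, fun h => huC h.2⟩, hnotE'⟩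
      · refine Finset.mem_union_left _ (Finset.mem_sdiff.mpr ⟨?_, ?_⟩)
        · simp only [hcut, Finset.mem_filter, Finset.mem_univ, true_and]
          exact ⟨u, v, huv, huAA, hvBB⟩
        · intro heK
          rw [hK, Finset.mem_biUnion] at heK
          obtain ⟨C, hC𝒮, heC⟩ := heK
          have hCsp := (mem𝒮 C).mp hC𝒮
          simp only [hKC, Finset.mem_filter, Finset.mem_univ, true_and] at heC
          rw [crosses_iff ends huv] at heC
          rcases heC with ⟨h1, h2⟩ | ⟨h1, h2⟩
          · by_cases hmvC : mv C
            · exact Set.disjoint_left.mp hdisjStar huA (hmvsub C hCsp hmvC h1.2)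
            · exact Set.disjoint_left.mp (hstaydisj C hCsp hmvC) h2.2 hvB
          · exact Set.disjoint_left.mp hABd huAA h2.1
    · have huB' : u ∉ Bstar := fun h => Set.disjoint_left.mp hdisjStar huA h
      obtain ⟨C, hCsp, hnm, huBC⟩ := hBloss u huBB huB'
      refine Finset.mem_union_right _ (Finset.mem_biUnion.mpr ⟨C, (mem𝒮 C).mpr hCsp, ?_⟩)
      have hvC : v ∉ C := fun h => Set.disjoint_left.mp (hstaydisj C hCsp hnm) h hvB
      simp only [hNN, if_neg hnm, Finset.mem_filter, Finset.mem_univ, true_and]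
      exact ⟨⟨u, v, huv, huBC.2, hvC⟩, ⟨u, v, huv, huBC, fun h => hvC h.2⟩, hnotE'⟩
  -- E'-boundary edges of A are covered by those of Astar plus the losses
  have hEAsub : EA ⊆ EAs ∪ 𝒮.biUnion LL := by
    intro e he
    simp only [hEA, Finset.mem_filter, Finset.mem_univ, true_and] at he
    obtain ⟨heE, hout⟩ := he
    have hpA : pe e heE ∈ A := (outE' e heE A hAS).mp hout
    by_cases hp : pe e heE ∈ Astar
    · refine Finset.mem_union_left _ ?_
      simp only [hEAs, Finset.mem_filter, Finset.mem_univ, true_and]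
      exact ⟨heE, (outE' e heE Astar hAstarS).mpr hp⟩
    · obtain ⟨C, hCsp, hmvC, hpAC⟩ := hAloss _ hpA hp
      refine Finset.mem_union_right _ (Finset.mem_biUnion.mpr ⟨C, (mem𝒮 C).mpr hCsp, ?_⟩)
      simp only [hLL, if_pos hmvC, Finset.mem_filter, Finset.mem_univ, true_and]
      exact ⟨heE, (outE' e heE (A ∩ C) (Set.inter_subset_left.trans hAS)).mpr hpAC⟩
  have hEBsub : EB ⊆ EBs ∪ 𝒮.biUnion LL := by
    intro e he
    simp only [hEB, Finset.mem_filter, Finset.mem_univ, true_and] at he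
    obtain ⟨heE, hout⟩ := he
    have hpB : pe e heE ∈ B := (outE' e heE B hBS).mp hout
    by_cases hp : pe e heE ∈ Bstar
    · refine Finset.mem_union_left _ ?_
      simp only [hEBs, Finset.mem_filter, Finset.mem_univ, true_and]
      exact ⟨heE, (outE' e heE Bstar hBstarS).mpr hp⟩
    · obtain ⟨C, hCsp, hnm, hpBC⟩ := hBloss _ hpB hp
      refine Finset.mem_union_right _ (Finset.mem_biUnion.mpr ⟨C, (mem𝒮 C).mpr hCsp, ?_⟩)
      simp only [hLL, if_neg hnm, Finset.mem_filter, Finset.mem_univ, true_and]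
      exact ⟨heE, (outE' e heE (B ∩ C) (Set.inter_subset_left.trans hBS)).mpr hpBC⟩
  -- apply the well-linkedness of S' in the contracted graph
  set B'' : Set V' := φ '' Bstar with hB''
  set A'' : Set V' := S' \ B'' with hA''
  have hB''S : B'' ⊆ S' := by
    rintro _ ⟨x, hx, rfl⟩
    exact (memS x).mp (hBstarS hx)
  have hwlApp := hwl A'' B'' (Set.diff_union_of_subset hB''S) Set.disjoint_sdiff_left
  have hAsle : EAs.card ≤ Nat.card {e : E // e ∈ E' ∧ Out (fun e => (ends e).map φ) A'' e} := by
    rw [card_eF]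
    apply Finset.card_le_card
    intro e he
    simp only [hEAs, Finset.mem_filter, Finset.mem_univ, true_and] at he
    simp only [Finset.mem_filter, Finset.mem_univ, true_and]
    obtain ⟨heE, hout⟩ := he
    refine ⟨heE, φ (pe e heE), φ (qe e heE), ?_, ?_, ?_⟩
    · show Sym2.map φ (ends e) = _
      rw [hpe e heE, Sym2.map_pair_eq]
    · have hpAs : pe e heE ∈ Astar := (outE' e heE Astar hAstarS).mp hout
      refine ⟨(memS _).mp (hAstarS hpAs), ?_⟩
      rw [hB'']
      rintro ⟨w, hwB, hweq⟩
      rcases hcontr.2 _ _ hweq with heq | ⟨C, hC, hwC, hpC⟩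
      · exact Set.disjoint_left.mp hdisjStar hpAs (heq ▸ hwB)
      · exact Set.disjoint_left.mp hdisjStar hpAs (hclusB C hC w hwC hwB _ hpC)
    · intro h
      rw [hA''] at h
      exact (hqeS e heE) ((memS _).mpr h.1)
  have hBsle : EBs.card ≤ Nat.card {e : E // e ∈ E' ∧ Out (fun e => (ends e).map φ) B'' e} := by
    rw [card_eF]
    apply Finset.card_le_card
    intro e he
    simp only [hEBs, Finset.mem_filter, Finset.mem_univ, true_and] at he
    simp only [Finset.mem_filter, Finset.mem_univ, true_and]
    obtain ⟨heE, hout⟩ := he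
    refine ⟨heE, φ (pe e heE), φ (qe e heE), ?_, ?_, ?_⟩
    · show Sym2.map φ (ends e) = _
      rw [hpe e heE, Sym2.map_pair_eq]
    · have hpBs : pe e heE ∈ Bstar := (outE' e heE Bstar hBstarS).mp hout
      rw [hB'']
      exact ⟨_, hpBs, rfl⟩
    · intro h
      exact (hqeS e heE) ((memS _).mpr (hB''S h))
  have hcrossle : crossCard (fun e => (ends e).map φ) A'' B'' ≤ cutStar.card := by
    have ecc : crossCard (fun e => (ends e).map φ) A'' B''
        = (Finset.univ.filter (Crosses (fun e => (ends e).map φ) A'' B'')).card := card_eF _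
    rw [ecc]
    apply Finset.card_le_card
    intro e he
    simp only [Finset.mem_filter, Finset.mem_univ, true_and] at he
    simp only [hcutStar, Finset.mem_filter, Finset.mem_univ, true_and]
    obtain ⟨x, y, hxy, hxA, hyB⟩ := he
    obtain ⟨u, v, huv⟩ := sym2_exists_pair (z := ends e)
    have hxy' : s(φ u, φ v) = s(x, y) := by
      rw [← Sym2.map_pair_eq, ← huv]; exact hxy
    have key : ∀ a b : V, ends e = s(a, b) → φ a ∈ A'' → φ b ∈ B'' →
        Crosses ends Astar Bstar e := by
      intro a b hab haA hbB
      rw [hB''] at hbB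
      obtain ⟨w, hwB, hweq⟩ := hbB
      have hbBs : b ∈ Bstar := by
        rcases hcontr.2 _ _ hweq with heq | ⟨C, hC, hwC, hbC⟩
        · exact heq ▸ hwB
        · exact hclusB C hC w hwC hwB b hbC
      rw [hA''] at haA
      have haS : a ∈ S := (memS a).mpr haA.1
      have haAs : a ∈ Astar := by
        rcases (hABstar ▸ haS : a ∈ Astar ∪ Bstar) with h | h
        · exact h
        · exact absurd ⟨a, h, rfl⟩ haA.2
      exact ⟨a, b, hab, haAs, hbBs⟩
    rcases Sym2.eq_iff.mp hxy' with ⟨h1, h2⟩ | ⟨h1, h2⟩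
    · exact key u v huv (by rw [h1]; exact hxA) (by rw [h2]; exact hyB)
    · exact key v u (by rw [huv, Sym2.eq_swap]) (by rw [h2]; exact hxA) (by rw [h1]; exact hyB)
  -- assemble all the counting
  have goalEq1 : Nat.card {e : E // e ∈ E' ∧ Out ends A e} = EA.card := by
    rw [hEA]; exact card_eF _
  have goalEq2 : Nat.card {e : E // e ∈ E' ∧ Out ends B e} = EB.card := by
    rw [hEB]; exact card_eF _
  have goalEqC : crossCard ends A B = cut.card := by
    rw [hcut]; exact card_eF _
  rw [goalEq1, goalEq2, goalEqC]
  have n1 : EA.card ≤ EAs.card + ∑ C ∈ 𝒮, (LL C).card :=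
    (Finset.card_le_card hEAsub).trans ((Finset.card_union_le _ _).trans
      (Nat.add_le_add_left Finset.card_biUnion_le _))
  have n2 : EB.card ≤ EBs.card + ∑ C ∈ 𝒮, (LL C).card :=
    (Finset.card_le_card hEBsub).trans ((Finset.card_union_le _ _).trans
      (Nat.add_le_add_left Finset.card_biUnion_le _))
  have n3 : cutStar.card ≤ (cut \ K).card + ∑ C ∈ 𝒮, (NN C).card :=
    (Finset.card_le_card hcutStarSub).trans ((Finset.card_union_le _ _).trans
      (Nat.add_le_add_left Finset.card_biUnion_le _))
  have n4 : (cut \ K).card + K.card = cut.card := Finset.card_sdiff_add_card_eq_card hKsubcut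
  have hLN : ((∑ C ∈ 𝒮, (LL C).card : ℕ) : ℝ) + ((∑ C ∈ 𝒮, (NN C).card : ℕ) : ℝ)
      ≤ 3 * K.card := by
    rw [← hKsum]
    push_cast
    rw [← Finset.sum_add_distrib, Finset.mul_sum]
    exact Finset.sum_le_sum hperC
  have hflow : α * min ((EAs.card : ℝ)) (EBs.card) ≤ (cutStar.card : ℝ) := by
    have hmm : min ((EAs.card : ℝ)) (EBs.card)
        ≤ min ((Nat.card {e : E // e ∈ E' ∧ Out (fun e => (ends e).map φ) A'' e} : ℝ))
          ((Nat.card {e : E // e ∈ E' ∧ Out (fun e => (ends e).map φ) B'' e} : ℝ)) :=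
      min_le_min (by exact_mod_cast hAsle) (by exact_mod_cast hBsle)
    calc α * min ((EAs.card : ℝ)) (EBs.card)
        ≤ α * min ((Nat.card {e : E // e ∈ E' ∧ Out (fun e => (ends e).map φ) A'' e} : ℝ))
          ((Nat.card {e : E // e ∈ E' ∧ Out (fun e => (ends e).map φ) B'' e} : ℝ)) :=
          mul_le_mul_of_nonneg_left hmm hα0.le
      _ ≤ (crossCard (fun e => (ends e).map φ) A'' B'' : ℝ) := hwlApp
      _ ≤ (cutStar.card : ℝ) := by exact_mod_cast hcrossle
  -- final arithmetic
  have hminle : min ((EA.card : ℝ)) (EB.card)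
      ≤ min ((EAs.card : ℝ)) (EBs.card) + ((∑ C ∈ 𝒮, (LL C).card : ℕ) : ℝ) := by
    have c1 : (EA.card : ℝ) ≤ (EAs.card : ℝ) + ((∑ C ∈ 𝒮, (LL C).card : ℕ) : ℝ) := by
      exact_mod_cast n1
    have c2 : (EB.card : ℝ) ≤ (EBs.card : ℝ) + ((∑ C ∈ 𝒮, (LL C).card : ℕ) : ℝ) := by
      exact_mod_cast n2
    rcases le_total ((EAs.card : ℝ)) ((EBs.card : ℝ)) with h | h
    · rw [min_eq_left h]
      exact (min_le_left _ _).trans c1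
    · rw [min_eq_right h]
      exact (min_le_right _ _).trans c2
  have hLpos : (0 : ℝ) ≤ ((∑ C ∈ 𝒮, (LL C).card : ℕ) : ℝ) := Nat.cast_nonneg _
  have t1 : α * min ((EA.card : ℝ)) (EB.card)
      ≤ α * min ((EAs.card : ℝ)) (EBs.card) + α * ((∑ C ∈ 𝒮, (LL C).card : ℕ) : ℝ) := by
    rw [← mul_add]
    exact mul_le_mul_of_nonneg_left hminle hα0.le
  have t2 : (cutStar.card : ℝ) ≤ ((cut \ K).card : ℝ) + ((∑ C ∈ 𝒮, (NN C).card : ℕ) : ℝ) := by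
    exact_mod_cast n3
  have t3 : ((cut \ K).card : ℝ) + (K.card : ℝ) = (cut.card : ℝ) := by exact_mod_cast n4
  have t4 : α * ((∑ C ∈ 𝒮, (LL C).card : ℕ) : ℝ) ≤ ((∑ C ∈ 𝒮, (LL C).card : ℕ) : ℝ) := by
    nlinarith
  have t5 : (K.card : ℝ) ≤ (cut.card : ℝ) := by
    exact_mod_cast Finset.card_le_card hKsubcut
  have hfinal : α * min ((EA.card : ℝ)) (EB.card) ≤ 3 * (cut.card : ℝ) := by
    linarith
  rw [div_mul_eq_mul_div, div_le_iff₀ (by norm_num : (0:ℝ) < 3)]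
  linarith

end VS
end

section
/- In the strong well-linked decomposition of S with |out(S)| = z, for each i with 1 ≤ i ≤ 2⌊log z⌋, the number of sets R in the final partition with z/2^i < |out(R)| ≤ z/2^{i-1} is at most 2^{3i+3}. -/
/-!
The potential `∑_{R ∈ W} |out R|²` starts at `z²` and never increases: if a step splits `R`
into `A, B` with `a, b` edges of `out R` leaving `A, B` and `c = |E(A,B)|`, then `|out A| = a + c`,
`|out B| = b + c`, `|out R| = a + b`, and `(a+c)² + (b+c)² ≤ (a+b)²` because `3c ≤ min a b`.
Each set counted has `|out R|² > z²/4^i`, so there are at most `4^i ≤ 2^{3i+3}` of them.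
-/

open scoped Classical

namespace VS

variable {V V' E : Type*}

/-- One step of the strong well-linked decomposition: some set `R` of the current
partition is replaced by a partition `(A, B)` of sparsity less than `1/3`. -/
def StrongStep {V E : Type*} [Fintype E] [DecidableEq V] (ends : E → Sym2 V)
    (W W' : Finset (Finset V)) : Prop :=
  ∃ R ∈ W, ∃ A B : Finset V, A.Nonempty ∧ B.Nonempty ∧ Disjoint A B ∧ A ∪ B = R ∧
    3 * crossCard ends ↑A ↑B <
      min (Nat.card {e : E // Out ends ↑R e ∧ Out ends ↑A e})
          (Nat.card {e : E // Out ends ↑R e ∧ Out ends ↑B e}) ∧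
    W' = insert A (insert B (W.erase R))

lemma _root_.Nat.card_subtype_or_of_disjoint {α : Type*} [Finite α] {p q : α → Prop}
    (h : ∀ a, p a → ¬ q a) :
    Nat.card {a // p a ∨ q a} = Nat.card {a // p a} + Nat.card {a // q a} := by
  have := Fintype.ofFinite α
  simp only [Nat.card_eq_fintype_card]
  exact Fintype.card_subtype_or_disjoint p q fun _ hp hq a ha => h a (hp a ha) (hq a ha)

lemma _root_.Finset.sum_insert_le_add {α M : Type*} [DecidableEq α] [AddCommMonoid M]
    [PartialOrder M] [CanonicallyOrderedAdd M] (s : Finset α) (f : α → M) (a : α) :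
    ∑ x ∈ insert a s, f x ≤ f a + ∑ x ∈ s, f x := by
  by_cases h : a ∈ s
  · rw [Finset.insert_eq_of_mem h]; exact le_add_self
  · rw [Finset.sum_insert h]

lemma _root_.Finset.card_filter_lt_mul_le_sq {ι : Type*} (s : Finset ι) (f : ι → ℕ) {z : ℕ}
    (hsum : ∑ x ∈ s, f x ^ 2 ≤ z ^ 2) (c : ℕ) :
    (s.filter fun x => z < c * f x).card ≤ c ^ 2 := by
  set t := s.filter fun x => z < c * f x
  have hbound : ∀ x ∈ t, (z + 1) ^ 2 ≤ c ^ 2 * f x ^ 2 := fun x hx => by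
    rw [← mul_pow]; exact Nat.pow_le_pow_left (Finset.mem_filter.mp hx).2 2
  refine Nat.le_of_mul_le_mul_right ?_ (by positivity : 0 < (z + 1) ^ 2)
  calc t.card * (z + 1) ^ 2 ≤ ∑ x ∈ t, c ^ 2 * f x ^ 2 := by
        simpa using Finset.card_nsmul_le_sum t _ _ hbound
    _ ≤ c ^ 2 * ∑ x ∈ s, f x ^ 2 := by
        rw [← Finset.mul_sum]
        exact Nat.mul_le_mul_left _ (Finset.sum_le_sum_of_subset (Finset.filter_subset _ _))
    _ ≤ c ^ 2 * (z + 1) ^ 2 :=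
        Nat.mul_le_mul_left _ (hsum.trans (Nat.pow_le_pow_left z.le_succ 2))

section Decomposition

variable {V E : Type*} {ends : E → Sym2 V} {A B R : Set V}

lemma crosses_comm {e : E} : Crosses ends A B e ↔ Crosses ends B A e := by
  constructor <;> rintro ⟨u, v, h, hu, hv⟩ <;> exact ⟨v, u, h.trans Sym2.eq_swap, hv, hu⟩

lemma crossCard_comm : crossCard ends A B = crossCard ends B A :=
  Nat.card_congr (Equiv.subtypeEquivRight fun _ => crosses_comm)

lemma out_iff_mem_of_subset (hAR : A ⊆ R) {e : E} {u v : V} (h : ends e = s(u, v))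
    (hv : v ∉ R) : Out ends A e ↔ u ∈ A := by
  refine ⟨?_, fun hu => ⟨u, v, h, hu, fun hvA => hv (hAR hvA)⟩⟩
  rintro ⟨x, y, hxy, hx, -⟩
  rcases Sym2.eq_iff.mp (hxy.symm.trans h) with ⟨rfl, -⟩ | ⟨rfl, -⟩
  · exact hx
  · exact absurd (hAR hx) hv

variable [Finite E]

lemma outCard_eq_add_crossCard (hU : A ∪ B = R) (hD : Disjoint A B) :
    outCard ends A = Nat.card {e : E // Out ends R e ∧ Out ends A e} + crossCard ends A B := by
  have hAR : A ⊆ R := hU ▸ Set.subset_union_left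
  have hBR : B ⊆ R := hU ▸ Set.subset_union_right
  have hiff : ∀ e : E,
      Out ends A e ↔ (Out ends R e ∧ Out ends A e) ∨ Crosses ends A B e := by
    refine fun e => ⟨fun hOA => ?_, ?_⟩
    · obtain ⟨x, y, h, hx, hy⟩ := hOA
      by_cases hyR : y ∈ R
      · have hyB : y ∈ B := ((hU ▸ hyR : y ∈ A ∪ B)).resolve_left hy
        exact Or.inr ⟨x, y, h, hx, hyB⟩
      · exact Or.inl ⟨⟨x, y, h, hAR hx, hyR⟩, x, y, h, hx, hy⟩
    · rintro (⟨-, hOA⟩ | ⟨x, y, h, hx, hy⟩)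
      · exact hOA
      · exact ⟨x, y, h, hx, Set.disjoint_right.mp hD hy⟩
  have hdisj : ∀ e, Out ends R e ∧ Out ends A e → ¬ Crosses ends A B e := by
    rintro e ⟨⟨u, v, h, -, hv⟩, -⟩ ⟨x, y, hxy, hx, hy⟩
    rcases Sym2.eq_iff.mp (hxy.symm.trans h) with ⟨-, rfl⟩ | ⟨rfl, -⟩
    · exact hv (hBR hy)
    · exact hv (hAR hx)
  rw [outCard, crossCard, ← Nat.card_subtype_or_of_disjoint hdisj]
  exact Nat.card_congr (Equiv.subtypeEquivRight hiff)

lemma card_out_inter_add_card_out_inter (hU : A ∪ B = R) (hD : Disjoint A B) :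
    Nat.card {e : E // Out ends R e ∧ Out ends A e} +
      Nat.card {e : E // Out ends R e ∧ Out ends B e} = outCard ends R := by
  have hAR : A ⊆ R := hU ▸ Set.subset_union_left
  have hBR : B ⊆ R := hU ▸ Set.subset_union_right
  have hiff : ∀ e : E, Out ends R e ↔
      (Out ends R e ∧ Out ends A e) ∨ (Out ends R e ∧ Out ends B e) := by
    refine fun e => ⟨fun hOR => ?_, by rintro (⟨hOR, -⟩ | ⟨hOR, -⟩) <;> exact hOR⟩
    obtain ⟨u, v, h, hu, hv⟩ := hOR
    rcases (hU ▸ hu : u ∈ A ∪ B) with huA | huB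
    · exact Or.inl ⟨⟨u, v, h, hu, hv⟩, (out_iff_mem_of_subset hAR h hv).mpr huA⟩
    · exact Or.inr ⟨⟨u, v, h, hu, hv⟩, (out_iff_mem_of_subset hBR h hv).mpr huB⟩
  have hdisj : ∀ e, Out ends R e ∧ Out ends A e → ¬ (Out ends R e ∧ Out ends B e) := by
    rintro e ⟨⟨u, v, h, -, hv⟩, hOA⟩ ⟨-, hOB⟩
    exact Set.disjoint_left.mp hD ((out_iff_mem_of_subset hAR h hv).mp hOA)
      ((out_iff_mem_of_subset hBR h hv).mp hOB)
  rw [outCard, ← Nat.card_subtype_or_of_disjoint hdisj]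
  exact (Nat.card_congr (Equiv.subtypeEquivRight hiff)).symm

lemma sq_outCard_add_sq_outCard_le_of_sparse (hU : A ∪ B = R) (hD : Disjoint A B)
    (hsparse : 3 * crossCard ends A B ≤
      min (Nat.card {e : E // Out ends R e ∧ Out ends A e})
          (Nat.card {e : E // Out ends R e ∧ Out ends B e})) :
    outCard ends A ^ 2 + outCard ends B ^ 2 ≤ outCard ends R ^ 2 := by
  have hA := outCard_eq_add_crossCard (ends := ends) hU hD
  have hB := outCard_eq_add_crossCard (ends := ends) ((Set.union_comm B A).trans hU) hD.symm
  rw [← crossCard_comm] at hB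
  rw [hA, hB, ← card_out_inter_add_card_out_inter hU hD]
  rw [le_min_iff] at hsparse
  nlinarith [hsparse.1, hsparse.2]

end Decomposition

section Potential

variable {V E : Type*} [Fintype E] [DecidableEq V] {ends : E → Sym2 V}

lemma sum_sq_outCard_le_of_strongStep {W W' : Finset (Finset V)} (h : StrongStep ends W W') :
    ∑ R ∈ W', outCard ends (R : Set V) ^ 2 ≤ ∑ R ∈ W, outCard ends (R : Set V) ^ 2 := by
  obtain ⟨R, hR, A, B, -, -, hD, hU, hsparse, rfl⟩ := h
  have hsplit := sq_outCard_add_sq_outCard_le_of_sparse (ends := ends)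
    (by rw [← Finset.coe_union, hU]) (Finset.disjoint_coe.mpr hD) hsparse.le
  set f : Finset V → ℕ := fun R => outCard ends (R : Set V) ^ 2
  calc ∑ X ∈ insert A (insert B (W.erase R)), f X
      ≤ f A + (f B + ∑ X ∈ W.erase R, f X) :=
        (Finset.sum_insert_le_add _ _ _).trans
          (Nat.add_le_add_left (Finset.sum_insert_le_add _ _ _) _)
    _ ≤ f R + ∑ X ∈ W.erase R, f X := by simp only [f] at hsplit ⊢; omega
    _ = ∑ X ∈ W, f X := Finset.add_sum_erase W f hR

lemma sum_sq_outCard_le_of_reflTransGen {S : Finset V} {W : Finset (Finset V)}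
    (h : Relation.ReflTransGen (StrongStep ends) {S} W) :
    ∑ R ∈ W, outCard ends (R : Set V) ^ 2 ≤ outCard ends (S : Set V) ^ 2 := by
  induction h with
  | refl => simp
  | tail _ hstep ih => exact (sum_sq_outCard_le_of_strongStep hstep).trans ih

end Potential

theorem stmt14_general {V E : Type*} [Fintype E] [DecidableEq V] (ends : E → Sym2 V)
    (S : Finset V) (z : ℕ) (hz : z = outCard ends ↑S)
    (W : Finset (Finset V))
    (hreach : Relation.ReflTransGen (StrongStep ends) {S} W)
    (i : ℕ) :
    (W.filter (fun R => (z : ℝ) / 2 ^ i < (outCard ends ↑R : ℝ) ∧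
        (outCard ends ↑R : ℝ) ≤ (z : ℝ) / 2 ^ (i - 1))).card ≤ 2 ^ (3 * i + 3) := by
  have hsum : ∑ R ∈ W, outCard ends (R : Set V) ^ 2 ≤ z ^ 2 :=
    hz ▸ sum_sq_outCard_le_of_reflTransGen hreach
  have hcount := Finset.card_filter_lt_mul_le_sq W (fun R => outCard ends (R : Set V)) hsum (2 ^ i)
  refine (Finset.card_le_card_of_surjOn (fun R : Finset V => (R : Set V)) ?_).trans
    (hcount.trans ?_)
  -- `↑R` makes the filter range over the image of `W` in `Finset (Set V)`.
  · intro X hX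
    obtain ⟨⟨R, hRW, rfl⟩, hlow, -⟩ := by simpa using hX
    refine ⟨R, Finset.mem_filter.mpr ⟨hRW, ?_⟩, rfl⟩
    rw [div_lt_iff₀ (by positivity), mul_comm] at hlow
    exact_mod_cast hlow
  · rw [← pow_mul]
    exact Nat.pow_le_pow_right two_pos (by omega)

/-- In the strong well-linked decomposition of `S` (`z = |out(S)|`),
for every `1 ≤ i ≤ 2⌊log z⌋`, the number of sets `R` of the final partition with
`z/2^i < |out(R)| ≤ z/2^{i-1}` is at most `2^{3i+3}`. -/
theorem stmt14 {V E : Type*} [Fintype V] [Fintype E] [DecidableEq V] (ends : E → Sym2 V)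
    (S : Finset V) (z : ℕ) (hz : z = outCard ends ↑S) (hz2 : 2 ≤ z)
    (W : Finset (Finset V))
    (hreach : Relation.ReflTransGen (StrongStep ends) {S} W)
    (i : ℕ) (hi1 : 1 ≤ i) (hi2 : i ≤ 2 * Nat.log 2 z) :
    (W.filter (fun R => (z : ℝ) / 2 ^ i < (outCard ends ↑R : ℝ) ∧
        (outCard ends ↑R : ℝ) ≤ (z : ℝ) / 2 ^ (i - 1))).card ≤ 2 ^ (3 * i + 3) :=
  stmt14_general ends S z hz W hreach i

end VS
end
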